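/- Let G be a finite group of order N, n ≥ 1, and let X_n be the set of pairs (ξ,σ), with ξ : Fin n → G and σ ∈ Perm(Fin n), such that for every x ∈ Fin n the cycle product of ξ along the orbit of x equals the identity. Then for every element t of a commutative ring R, Σ_{(ξ,σ) ∈ X_n} t^{c(σ)} = ∏_{i=0}^{n−1} (t + i·N), where c(σ) is the number of orbits of σ on Fin n. -/

import Mathlib

/-- The cycle product of `ξ : Fin n → G` along the orbit of `x` under `σ`:
if `d ≥ 1` is the size of the orbit of `x` (the minimal period of `x` under `σ`),
this is `ξ(σ^{d-1} x) · ξ(σ^{d-2} x) ⋯ ξ(σ x) · ξ(x)`. -/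
noncomputable def cycleProd {G : Type*} [Group G] {n : ℕ} (σ : Equiv.Perm (Fin n))
    (ξ : Fin n → G) (x : Fin n) : G :=
  (((List.range (Function.minimalPeriod (⇑σ) x)).map (fun k => ξ ((σ ^ k) x))).reverse).prod

/-!
The cycle products of `ξ` along `σ` are all trivial iff `ξ` is a `σ`-coboundary,
`ξ x = h (σ x) * (h x)⁻¹`. Two maps `h` give the same coboundary iff they differ (on the right)
by a `σ`-invariant map, and there are `N ^ c(σ)` of those, so each `σ` admits exactly
`N ^ (n - c(σ))` maps `ξ`. It remains to show
`∑ σ, N ^ (n - c(σ)) * t ^ c(σ) = ∏ (t + i N)`, by induction on `n`: writing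
`σ ∈ Perm (Fin (n + 1))` as `(σ 0, e)` with `e ∈ Perm (Fin n)`, the choice `σ 0 = 0` adds a
fixed point to `e`, and each of the `n` other choices inserts `0` into an existing cycle.
-/

open Function Finset

namespace Fin

variable {n : ℕ} {β : Type*}

def subtypeTailEquiv (Q : (Fin n → β) → Prop) :
    {f : Fin (n + 1) → β // Q (tail f)} ≃ β × {g // Q g} where
  toFun f := (f.1 0, ⟨tail f.1, f.2⟩)
  invFun q := ⟨cons q.1 q.2.1, by simpa using q.2.2⟩
  left_inv f := by simp
  right_inv q := by simp

def subtypeSuccEqZeroTailEquiv (j : Fin n) (Q : (Fin n → β) → Prop) :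
    {f : Fin (n + 1) → β // f j.succ = f 0 ∧ Q (tail f)} ≃ {g // Q g} where
  toFun f := ⟨tail f.1, f.2.2⟩
  invFun g := ⟨cons (g.1 j) g.1, by simpa using g.2⟩
  left_inv f := by
    ext x
    cases x using Fin.cases with
    | zero => exact f.2.1
    | succ i => rfl
  right_inv g := by simp

end Fin

namespace Equiv.Perm

variable {α : Type*}

section NumCycles

noncomputable def numCycles (σ : Perm α) : ℕ := Nat.card (Quotient (SameCycle.setoid σ))

lemma numCycles_le [Finite α] (σ : Perm α) : σ.numCycles ≤ Nat.card α :=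
  Nat.card_le_card_of_surjective _ Quotient.mk_surjective

lemma invariant_iff_sameCycle_le_ker [Finite α] {β : Type*} (σ : Perm α) (f : α → β) :
    (∀ x, f (σ x) = f x) ↔ SameCycle.setoid σ ≤ Setoid.ker f := by
  refine ⟨fun hf x y hxy => ?_, fun hf x => hf (sameCycle_apply_left.2 SameCycle.rfl)⟩
  obtain ⟨k, -, rfl⟩ := hxy.exists_pow_eq'
  rw [Setoid.ker_def, coe_pow]
  exact (congrFun (iterate_invariant (funext hf) k) x).symm

lemma card_invariant_fun [Finite α] (σ : Perm α) (β : Type*) :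
    Nat.card {f : α → β // ∀ x, f (σ x) = f x} = Nat.card β ^ σ.numCycles := by
  rw [numCycles, ← Nat.card_fun]
  exact Nat.card_congr
    ((Equiv.subtypeEquivRight (invariant_iff_sameCycle_le_ker σ)).trans (Setoid.liftEquiv _))

lemma invariant_decomposeFin_symm_iff {n : ℕ} {β : Type*} (p : Fin (n + 1)) (e : Perm (Fin n))
    (f : Fin (n + 1) → β) :
    (∀ x, f (decomposeFin.symm (p, e) x) = f x) ↔
      f p = f 0 ∧ ∀ i, Fin.tail f (e i) = Fin.tail f i := by
  rw [Fin.forall_fin_succ, decomposeFin_symm_apply_zero]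
  refine and_congr_right fun hp => forall_congr' fun i => ?_
  rw [decomposeFin_symm_apply_succ, apply_swap_eq_self hp.symm]
  rfl

lemma numCycles_decomposeFin_symm {n : ℕ} (p : Fin (n + 1)) (e : Perm (Fin n)) :
    (decomposeFin.symm (p, e)).numCycles = e.numCycles + if p = 0 then 1 else 0 := by
  -- compare the numbers `2 ^ numCycles` of invariant `Bool`-valued maps
  refine Nat.pow_right_injective (le_refl 2) ?_
  have hbool : Nat.card Bool = 2 := by simp
  have hcard := card_invariant_fun (decomposeFin.symm (p, e)) Bool
  rw [hbool] at hcard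
  change 2 ^ _ = 2 ^ _
  rw [← hcard, Nat.card_congr (Equiv.subtypeEquivRight (invariant_decomposeFin_symm_iff p e))]
  let Q : (Fin n → Bool) → Prop := fun g => ∀ i, g (e i) = g i
  cases p using Fin.cases with
  | zero =>
    simp only [true_and, if_true, pow_succ, mul_comm _ 2]
    rw [Nat.card_congr (Fin.subtypeTailEquiv Q), Nat.card_prod, card_invariant_fun, hbool]
  | succ j =>
    simp only [Fin.succ_ne_zero, if_false, add_zero]
    rw [Nat.card_congr (Fin.subtypeSuccEqZeroTailEquiv j Q), card_invariant_fun, hbool]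

theorem sum_pow_sub_numCycles_mul_pow {R : Type*} [CommSemiring R] (a b : R) (n : ℕ) :
    ∑ σ : Perm (Fin n), a ^ (n - σ.numCycles) * b ^ σ.numCycles =
      ∏ i ∈ range n, (b + i * a) := by
  induction n with
  | zero => simp [numCycles]
  | succ n ih =>
    rw [← decomposeFin.symm.sum_comp, Fintype.sum_prod_type, Fin.sum_univ_succ, prod_range_succ,
      ← ih, sum_mul]
    simp only [numCycles_decomposeFin_symm, Fin.succ_ne_zero, if_true, if_false, add_zero]
    rw [sum_const, card_univ, Fintype.card_fin, smul_sum, ← sum_add_distrib]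
    refine sum_congr rfl fun e _ => ?_
    rw [Nat.add_sub_add_right,
      Nat.sub_add_comm (e.numCycles_le.trans_eq (Nat.card_fin n)), nsmul_eq_mul]
    ring

end NumCycles

section Coboundary

variable {G : Type*} [Group G]

/-- `cycleProd σ ξ x` is `pathProd σ ξ x (minimalPeriod σ x)` by definition. -/
def pathProd (σ : Perm α) (ξ : α → G) (x : α) (m : ℕ) : G :=
  (((List.range m).map (fun k => ξ ((σ ^ k) x))).reverse).prod

lemma pathProd_succ (σ : Perm α) (ξ : α → G) (x : α) (m : ℕ) :
    pathProd σ ξ x (m + 1) = ξ ((σ ^ m) x) * pathProd σ ξ x m := by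
  simp [pathProd, List.range_succ]

lemma pathProd_add (σ : Perm α) (ξ : α → G) (x : α) (m l : ℕ) :
    pathProd σ ξ x (m + l) = pathProd σ ξ ((σ ^ m) x) l * pathProd σ ξ x m := by
  induction l with
  | zero => simp [pathProd]
  | succ l ih =>
    rw [← add_assoc, pathProd_succ, ih, pathProd_succ, mul_assoc, ← mul_apply, ← pow_add,
      add_comm l]

def coboundary (σ : Perm α) (h : α → G) : α → G := fun x => h (σ x) * (h x)⁻¹

lemma pathProd_coboundary (σ : Perm α) (h : α → G) (x : α) (m : ℕ) :
    pathProd σ (σ.coboundary h) x m = h ((σ ^ m) x) * (h x)⁻¹ := by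
  induction m with
  | zero => simp [pathProd]
  | succ m ih =>
    rw [pathProd_succ, ih, coboundary, mul_assoc, inv_mul_cancel_left, pow_succ', mul_apply]

lemma pow_minimalPeriod_apply (σ : Perm α) (x : α) : (σ ^ minimalPeriod σ x) x = x := by
  rw [coe_pow]
  exact iterate_minimalPeriod

lemma pathProd_periodic {n : ℕ} {σ : Perm (Fin n)} {ξ : Fin n → G} {x : Fin n}
    (hx : cycleProd σ ξ x = 1) : Periodic (pathProd σ ξ x) (minimalPeriod σ x) := fun m => by
  rw [add_comm, pathProd_add, pow_minimalPeriod_apply]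
  exact mul_eq_left.2 hx

lemma pathProd_eq_of_pow_apply_eq {n : ℕ} {σ : Perm (Fin n)} {ξ : Fin n → G} {x : Fin n}
    (hx : cycleProd σ ξ x = 1) {a b : ℕ} (hab : (σ ^ a) x = (σ ^ b) x) :
    pathProd σ ξ x a = pathProd σ ξ x b := by
  have hpos := minimalPeriod_pos_of_mem_periodicPts (σ.injective.mem_periodicPts x)
  have hmod : a % minimalPeriod σ x = b % minimalPeriod σ x := by
    rw [coe_pow, coe_pow, ← iterate_mod_minimalPeriod_eq,
      ← iterate_mod_minimalPeriod_eq (n := b)] at hab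
    exact (iterate_eq_iterate_iff_of_lt_minimalPeriod (Nat.mod_lt _ hpos)
      (Nat.mod_lt _ hpos)).1 hab
  rw [← (pathProd_periodic hx).map_mod_nat, hmod, (pathProd_periodic hx).map_mod_nat]

theorem cycleProd_eq_one_iff_mem_range_coboundary {n : ℕ} (σ : Perm (Fin n))
    (ξ : Fin n → G) : (∀ x, cycleProd σ ξ x = 1) ↔ ξ ∈ Set.range σ.coboundary := by
  constructor
  · intro hξ
    -- `h x` is the path product to `x` from a chosen base point `r x` of its cycle
    let r : Fin n → Fin n := fun x => (Quotient.mk (SameCycle.setoid σ) x).out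
    have hr (x : Fin n) : SameCycle σ (r x) x := Quotient.mk_out (s := SameCycle.setoid σ) x
    have hrσ (x : Fin n) : r (σ x) = r x :=
      congrArg Quotient.out (Quotient.sound (sameCycle_apply_left.2 SameCycle.rfl))
    choose k _ hk using fun x => (hr x).exists_pow_eq'
    refine ⟨fun x => pathProd σ ξ (r x) (k x), funext fun x => ?_⟩
    have hkσ : (σ ^ k (σ x)) (r x) = (σ ^ (k x + 1)) (r x) := by
      rw [pow_succ', mul_apply, hk, ← hrσ, hk]
    show pathProd σ ξ (r (σ x)) (k (σ x)) * (pathProd σ ξ (r x) (k x))⁻¹ = ξ x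
    rw [hrσ, pathProd_eq_of_pow_apply_eq (hξ _) hkσ, pathProd_succ, hk, mul_inv_cancel_right]
  · rintro ⟨h, rfl⟩ x
    rw [cycleProd, ← pathProd, pathProd_coboundary, pow_minimalPeriod_apply, mul_inv_cancel]

def invariantSubgroup (σ : Perm α) : Subgroup (α → G) where
  carrier := {h | ∀ x, h (σ x) = h x}
  mul_mem' ha hb x := by simp [ha x, hb x]
  one_mem' _ := rfl
  inv_mem' ha x := by simp [ha x]

lemma coboundary_eq_coboundary_iff (σ : Perm α) (a b : α → G) :
    σ.coboundary a = σ.coboundary b ↔ a⁻¹ * b ∈ σ.invariantSubgroup := by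
  refine funext_iff.trans (forall_congr' fun x => ?_)
  simp only [coboundary, Pi.mul_apply, Pi.inv_apply]
  rw [mul_inv_eq_iff_eq_mul, mul_assoc, ← inv_mul_eq_iff_eq_mul, ← inv_inj, mul_inv_rev,
    mul_inv_rev, inv_inv, inv_inv]

lemma card_range_coboundary_mul_card_invariantSubgroup (σ : Perm α) :
    Nat.card (Set.range (σ.coboundary (G := G))) * Nat.card (σ.invariantSubgroup (G := G)) =
      Nat.card (α → G) := by
  rw [Subgroup.card_eq_card_quotient_mul_card_subgroup σ.invariantSubgroup]
  congr 1
  exact Nat.card_congr ((Setoid.quotientKerEquivRange _).symm.trans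
    (Quotient.congrRight fun a b => (coboundary_eq_coboundary_iff σ a b).trans
      QuotientGroup.leftRel_apply.symm))

theorem card_cycleProd_eq_one [Finite G] {n : ℕ} (σ : Perm (Fin n)) :
    Nat.card {ξ : Fin n → G // ∀ x, cycleProd σ ξ x = 1} =
      Nat.card G ^ (n - σ.numCycles) := by
  have hle : σ.numCycles ≤ n := σ.numCycles_le.trans_eq (Nat.card_fin n)
  have hcount := card_range_coboundary_mul_card_invariantSubgroup (G := G) σ
  rw [show Nat.card σ.invariantSubgroup = _ from card_invariant_fun σ G, Nat.card_fun,
    Nat.card_fin, ← pow_sub_mul_pow (Nat.card G) hle] at hcount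
  exact (Nat.card_congr
      (Equiv.subtypeEquivRight (cycleProd_eq_one_iff_mem_range_coboundary σ))).trans
    (Nat.eq_of_mul_eq_mul_right (pow_pos Nat.card_pos _) hcount)

end Coboundary

end Equiv.Perm

open Classical in
theorem stmt8_general (G : Type*) [Group G] [Fintype G] {R : Type*} [CommRing R]
    {n : ℕ} (N : ℕ) (hN : N = Fintype.card G) (t : R) :
    ∑ p ∈ Finset.univ.filter
        (fun p : (Fin n → G) × Equiv.Perm (Fin n) => ∀ x : Fin n, cycleProd p.2 p.1 x = 1),
        t ^ (Nat.card (Quotient (Equiv.Perm.SameCycle.setoid p.2))) =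
      ∏ i ∈ Finset.range n, (t + (i : R) * (N : R)) := by
  rw [Finset.sum_filter, Fintype.sum_prod_type_right]
  have hfiber (σ : Equiv.Perm (Fin n)) :
      ∑ ξ : Fin n → G, (if ∀ x, cycleProd σ ξ x = 1 then t ^ σ.numCycles else 0) =
        (N : R) ^ (n - σ.numCycles) * t ^ σ.numCycles := by
    rw [← Finset.sum_filter, sum_const, ← Fintype.card_subtype, ← Nat.card_eq_fintype_card,
      Equiv.Perm.card_cycleProd_eq_one, Nat.card_eq_fintype_card, ← hN, nsmul_eq_mul,
      Nat.cast_pow]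
  exact (sum_congr rfl fun σ _ => hfiber σ).trans
    (Equiv.Perm.sum_pow_sub_numCycles_mul_pow _ _ n)

open Classical in
/-- Let `G` be a finite group of order `N`, `n ≥ 1`, and let `Xₙ` be the
set of pairs `(ξ, σ)` such that every cycle product of `ξ` along an orbit of `σ` is
trivial.  Then for every `t` in a commutative ring `R`,
`Σ_{(ξ,σ) ∈ Xₙ} t ^ c(σ) = ∏_{i=0}^{n-1} (t + i·N)`, where `c(σ)` is the number of
orbits of `σ` on `Fin n`. -/
theorem stmt8 (G : Type*) [Group G] [Fintype G] {R : Type*} [CommRing R]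
    {n : ℕ} (hn : 1 ≤ n) (N : ℕ) (hN : N = Fintype.card G) (t : R) :
    ∑ p ∈ Finset.univ.filter
        (fun p : (Fin n → G) × Equiv.Perm (Fin n) => ∀ x : Fin n, cycleProd p.2 p.1 x = 1),
        t ^ (Nat.card (Quotient (Equiv.Perm.SameCycle.setoid p.2))) =
      ∏ i ∈ Finset.range n, (t + (i : R) * (N : R)) :=
  stmt8_general G N hN t
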